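/- For every α with 1/2 < α < 1 there exists N : ℕ → ℕ with N(d) > d for all d, d/N(d) → 1/2 as d → ∞, and a constant C > 0 with |N(d) - 2d| ≤ C·d^α for all d, such that liminf_{d→∞} P_{d,N(d)} = 0 and limsup_{d→∞} P_{d,N(d)} = 1. -/

import Mathlib

open Filter Finset Real Topology

/-- The Wendel probability `P_{d,N} = 2^{1-N} · Σ_{i=0}^{d-1} C(N-1, i)`. -/
noncomputable def wendelP (d N : ℕ) : ℝ :=
  (∑ i ∈ Finset.range d, ((N - 1).choose i : ℝ)) / 2 ^ (N - 1)

lemma wendelP_nonneg (d N : ℕ) : 0 ≤ wendelP d N := by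
  apply div_nonneg
  · exact Finset.sum_nonneg fun i _ => Nat.cast_nonneg _
  · positivity

lemma wendelP_le_one (d N : ℕ) (h : d ≤ N) : wendelP d N ≤ 1 := by
  rw [wendelP, div_le_one (by positivity)]
  calc (∑ i ∈ Finset.range d, ((N - 1).choose i : ℝ))
      ≤ ∑ i ∈ Finset.range (N - 1 + 1), ((N - 1).choose i : ℝ) := by
        apply Finset.sum_le_sum_of_subset_of_nonneg
        · apply Finset.range_subset_range.2; omega
        · intro i _ _; positivity
    _ = 2 ^ (N - 1) := by
        rw [← Nat.cast_sum]
        rw [Nat.sum_range_choose]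
        push_cast; ring

lemma wendelP_add_symm (d N : ℕ) (h1 : 1 ≤ d) (h2 : d ≤ N) :
    wendelP d N + wendelP (N - d) N = 1 := by
  rw [wendelP, wendelP, ← add_div, div_eq_one_iff_eq (by positivity)]
  have hn : N - 1 + 1 = N := by omega
  have key : (∑ i ∈ Finset.range (N - d), ((N - 1).choose i : ℝ))
      = ∑ i ∈ Finset.Ico d N, ((N - 1).choose i : ℝ) := by
    have h := Finset.sum_Ico_reflect (fun j => ((N - 1).choose j : ℝ)) 0 (m := N - d) (n := N - 1)
      (by omega)
    rw [show N - 1 + 1 - (N - d) = d by omega, show N - 1 + 1 - 0 = N by omega] at h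
    rw [← Nat.Ico_zero_eq_range, ← h]
    apply Finset.sum_congr rfl
    intro i hi
    simp only [Finset.mem_Ico] at hi
    beta_reduce
    norm_cast
    rw [Nat.choose_symm (show i ≤ N - 1 by omega)]
  rw [key, Finset.sum_range_add_sum_Ico _ (by omega : d ≤ N), ← Nat.cast_sum, ← hn]
  simp only [Nat.add_sub_cancel, Nat.sum_range_choose]
  push_cast
  ring

lemma choose_mono_right {n s : ℕ} (hs : 2 * s ≤ n) : ∀ r ≤ s, n.choose r ≤ n.choose s := by
  induction s with
  | zero =>
    intro r hr
    simp [Nat.le_zero.mp hr]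
  | succ s ih =>
    intro r hr
    rcases Nat.lt_or_ge r (s + 1) with h | h
    · exact le_trans (ih (by omega) r (by omega))
        (Nat.choose_le_succ_of_lt_half_left (by omega))
    · have : r = s + 1 := by omega
      subst this; rfl

lemma choose_step (n i s : ℕ) (h1 : 2 * (i + 1) ≤ n) (h2 : 4 * (2 * i + 2) + s ≤ 4 * n) :
    (n.choose i : ℝ) * (1 + (s : ℝ) / (2 * n)) ≤ n.choose (i + 1) := by
  have hn : 0 < n := by omega
  have hnR : (0:ℝ) < n := by exact_mod_cast hn
  have hin : i ≤ n := by omega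
  have hcR : (n.choose (i + 1) : ℝ) * (i + 1) = (n.choose i : ℝ) * ((n : ℝ) - i) := by
    have h' := Nat.choose_succ_right_eq n i
    have h'' : ((n.choose (i + 1)) : ℝ) * ((i : ℝ) + 1)
        = (n.choose i : ℝ) * (((n - i : ℕ)) : ℝ) := by exact_mod_cast h'
    rwa [Nat.cast_sub hin] at h''
  have h1R : 2 * ((i : ℝ) + 1) ≤ n := by exact_mod_cast h1
  have h2R : 4 * (2 * (i : ℝ) + 2) + s ≤ 4 * n := by exact_mod_cast h2
  have hsR : (0:ℝ) ≤ s := by positivity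
  have key : (1 + (s : ℝ) / (2 * n)) * ((i : ℝ) + 1) ≤ (n : ℝ) - i := by
    rw [add_mul, one_mul, ← le_sub_iff_add_le', div_mul_eq_mul_div,
      div_le_iff₀ (by positivity : (0:ℝ) < 2 * n)]
    nlinarith [mul_nonneg hsR (sub_nonneg.2 h1R)]
  have hpos : (0:ℝ) < (i : ℝ) + 1 := by positivity
  have h4 : (n.choose i : ℝ) * (1 + (s : ℝ) / (2 * n)) * ((i : ℝ) + 1)
      ≤ (n.choose (i + 1) : ℝ) * ((i : ℝ) + 1) := by
    rw [hcR]
    calc (n.choose i : ℝ) * (1 + (s : ℝ) / (2 * n)) * ((i : ℝ) + 1)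
        = (n.choose i : ℝ) * ((1 + (s : ℝ) / (2 * n)) * ((i : ℝ) + 1)) := by ring
      _ ≤ (n.choose i : ℝ) * ((n : ℝ) - i) :=
          mul_le_mul_of_nonneg_left key (by positivity)
  exact le_of_mul_le_mul_right h4 hpos

lemma choose_pow_le (n t s : ℕ) : ∀ J : ℕ,
    (∀ j < J, 2 * (t + j + 1) ≤ n ∧ 4 * (2 * (t + j) + 2) + s ≤ 4 * n) →
    (n.choose t : ℝ) * (1 + (s : ℝ) / (2 * n)) ^ J ≤ n.choose (t + J) := by
  intro J
  induction J with
  | zero => intro _; simp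
  | succ J ih =>
    intro h
    have hx : (0:ℝ) ≤ 1 + (s : ℝ) / (2 * n) := by positivity
    calc (n.choose t : ℝ) * (1 + (s : ℝ) / (2 * n)) ^ (J + 1)
        = (n.choose t : ℝ) * (1 + (s : ℝ) / (2 * n)) ^ J * (1 + (s : ℝ) / (2 * n)) := by ring
      _ ≤ (n.choose (t + J) : ℝ) * (1 + (s : ℝ) / (2 * n)) := by
          apply mul_le_mul_of_nonneg_right _ hx
          exact ih (fun j hj => h j (by omega))
      _ ≤ (n.choose (t + J + 1) : ℝ) := by
          have := choose_step n (t + J) s (h J (by omega)).1 (h J (by omega)).2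
          exact this
      _ = (n.choose (t + (J + 1)) : ℝ) := by rw [← Nat.add_assoc]

lemma wendelP_upper (p d k : ℕ) (hp : 1 ≤ p) (hd : 1 ≤ d) (hk8 : 8 * p ≤ k) (hkd : k ≤ d) :
    wendelP d (2 * d + k) ≤
      (d : ℝ) * p.factorial * 16 ^ p * (6 * d) ^ p / k ^ (2 * p) := by
  set n := 2 * d + k - 1 with hn
  set t := d - 1 with ht
  set s := k + 1 with hs
  set J := (k + 1) / 4 with hJ
  have hk1 : 1 ≤ k := by omega
  have hNn : 2 * d + k - 1 = n := rfl
  have hnpos : 0 < n := by omega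
  -- Step A : numerator bound
  have hA : (∑ i ∈ Finset.range d, (n.choose i : ℝ)) ≤ (d : ℝ) * n.choose t := by
    calc (∑ i ∈ Finset.range d, (n.choose i : ℝ))
        ≤ ∑ _i ∈ Finset.range d, (n.choose t : ℝ) := by
          apply Finset.sum_le_sum
          intro i hi
          simp only [Finset.mem_range] at hi
          exact_mod_cast choose_mono_right (by omega) i (by omega)
      _ = (d : ℝ) * n.choose t := by
          rw [Finset.sum_const, Finset.card_range, nsmul_eq_mul]
  -- Step B : product bound
  have hB : (n.choose t : ℝ) * (1 + (s : ℝ) / (2 * n)) ^ J ≤ n.choose (t + J) := by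
    apply choose_pow_le
    intro j hj
    constructor <;> omega
  -- Step C : choose ≤ 2 ^ n
  have hC : (n.choose (t + J) : ℝ) ≤ 2 ^ n := by
    have h1 : n.choose (t + J) ≤ ∑ i ∈ Finset.range (n + 1), n.choose i := by
      apply Finset.single_le_sum (f := fun i => n.choose i) (fun i _ => Nat.zero_le _)
      simp only [Finset.mem_range]
      omega
    rw [Nat.sum_range_choose] at h1
    exact_mod_cast h1
  set x : ℝ := (s : ℝ) / (2 * n) with hx
  have hxpos : 0 < x := by positivity
  -- Step D : binomial lower bound for (1+x)^J
  have hpJ : p ≤ J := by omega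
  have hD : (J.choose p : ℝ) * x ^ p ≤ (1 + x) ^ J := by
    rw [add_comm]
    rw [add_pow]
    calc (J.choose p : ℝ) * x ^ p = x ^ p * 1 ^ (J - p) * (J.choose p : ℝ) := by ring
      _ ≤ ∑ i ∈ Finset.range (J + 1), x ^ i * 1 ^ (J - i) * (J.choose i : ℝ) := by
          apply Finset.single_le_sum (f := fun i => x ^ i * 1 ^ (J - i) * (J.choose i : ℝ))
          · intro i _; positivity
          · simp only [Finset.mem_range]; omega
  -- Step E : choose lower bound
  have hE : (((J + 1 - p : ℕ) : ℝ)) ^ p / p.factorial ≤ (J.choose p : ℝ) := by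
    exact_mod_cast Nat.pow_le_choose p J
  -- numeric lower bounds
  have hJk : (k : ℝ) / 16 ≤ ((J + 1 - p : ℕ) : ℝ) := by
    have : k ≤ 16 * (J + 1 - p) := by omega
    have := (Nat.cast_le (α := ℝ)).2 this
    push_cast at this
    linarith
  have hxk : (k : ℝ) / (6 * d) ≤ x := by
    rw [hx]
    apply div_le_div₀ (by positivity) (by exact_mod_cast Nat.le_succ k) (by positivity)
    have : 2 * n ≤ 6 * d := by omega
    exact_mod_cast this
  -- combine lower bounds for (1+x)^J
  have hkpos : (0:ℝ) < k := by exact_mod_cast hk1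
  have hdpos : (0:ℝ) < d := by exact_mod_cast hd
  have hBig : (k : ℝ) ^ (2 * p) / ((p.factorial : ℝ) * 16 ^ p * (6 * d) ^ p)
      ≤ (1 + x) ^ J := by
    have h1 : ((k : ℝ) / 16) ^ p * ((k : ℝ) / (6 * d)) ^ p / p.factorial
        ≤ (((J + 1 - p : ℕ) : ℝ)) ^ p * x ^ p / p.factorial := by
      gcongr <;> positivity
    have h2 : (((J + 1 - p : ℕ) : ℝ)) ^ p * x ^ p / p.factorial ≤ (J.choose p : ℝ) * x ^ p := by
      calc (((J + 1 - p : ℕ) : ℝ)) ^ p * x ^ p / p.factorial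
          = ((((J + 1 - p : ℕ) : ℝ)) ^ p / p.factorial) * x ^ p := by ring
        _ ≤ (J.choose p : ℝ) * x ^ p := mul_le_mul_of_nonneg_right hE (by positivity)
    have h3 : ((k : ℝ) / 16) ^ p * ((k : ℝ) / (6 * d)) ^ p / p.factorial
        = (k : ℝ) ^ (2 * p) / ((p.factorial : ℝ) * 16 ^ p * (6 * d) ^ p) := by
      rw [div_pow, div_pow, two_mul, pow_add]
      field_simp
    rw [← h3]
    exact le_trans h1 (le_trans h2 hD)
  -- final assembly
  have hApos : (0:ℝ) < (1 + x) ^ J := by positivity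
  have hwend : wendelP d (2 * d + k) ≤ (d : ℝ) / (1 + x) ^ J := by
    rw [wendelP, hNn]
    rw [div_le_div_iff₀ (by positivity) hApos]
    calc (∑ i ∈ Finset.range d, (n.choose i : ℝ)) * (1 + x) ^ J
        ≤ ((d : ℝ) * n.choose t) * (1 + x) ^ J := by
          exact mul_le_mul_of_nonneg_right hA (le_of_lt hApos)
      _ = (d : ℝ) * ((n.choose t : ℝ) * (1 + x) ^ J) := by ring
      _ ≤ (d : ℝ) * (n.choose (t + J) : ℝ) := by
          exact mul_le_mul_of_nonneg_left hB (by positivity)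
      _ ≤ (d : ℝ) * 2 ^ n := mul_le_mul_of_nonneg_left hC (by positivity)
  calc wendelP d (2 * d + k) ≤ (d : ℝ) / (1 + x) ^ J := hwend
    _ ≤ (d : ℝ) / ((k : ℝ) ^ (2 * p) / ((p.factorial : ℝ) * 16 ^ p * (6 * d) ^ p)) := by
        apply div_le_div_of_nonneg_left (le_of_lt hdpos) _ hBig
        positivity
    _ = (d : ℝ) * p.factorial * 16 ^ p * (6 * d) ^ p / k ^ (2 * p) := by
        field_simp

lemma bound_conv (p : ℕ) (α : ℝ) (d : ℕ) (K : ℕ)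
    (hd : 1 ≤ d) (hK : (d : ℝ) ^ α / 2 ≤ K) :
    (d : ℝ) * p.factorial * 16 ^ p * (6 * d) ^ p / (K : ℝ) ^ (2 * p) ≤
      ((p.factorial : ℝ) * 96 ^ p * 4 ^ p) * (d : ℝ) ^ ((p + 1 : ℝ) - α * (2 * p)) := by
  have hdR : (1:ℝ) ≤ d := by exact_mod_cast hd
  have hd0 : (0:ℝ) < d := by linarith
  have hα2 : (0:ℝ) < (d : ℝ) ^ α / 2 := by positivity
  have hK0 : (0:ℝ) < K := lt_of_lt_of_le hα2 hK
  have step1 : (d : ℝ) * p.factorial * 16 ^ p * (6 * d) ^ p / (K : ℝ) ^ (2 * p) ≤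
      (d : ℝ) * p.factorial * 16 ^ p * (6 * d) ^ p / ((d : ℝ) ^ α / 2) ^ (2 * p) := by
    gcongr <;> first
      | positivity
      | exact hα2.le
  refine le_trans step1 (le_of_eq ?_)
  have e1 : ((d : ℝ) ^ α / 2) ^ (2 * p) = (d : ℝ) ^ (α * (2 * p : ℕ)) / 4 ^ p := by
    rw [div_pow, ← Real.rpow_natCast ((d : ℝ) ^ α) (2 * p), ← Real.rpow_mul hd0.le]
    congr 1
    rw [pow_mul]
    norm_num
  have e2 : (d : ℝ) ^ ((p + 1 : ℝ) - α * (2 * p)) =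
      (d : ℝ) ^ (p + 1 : ℕ) / (d : ℝ) ^ (α * (2 * p : ℕ)) := by
    rw [Real.rpow_sub hd0, ← Real.rpow_natCast (d : ℝ) (p + 1)]
    norm_num
  rw [e1, e2]
  have h4 : (0:ℝ) < (d : ℝ) ^ (α * (2 * p : ℕ)) := Real.rpow_pos_of_pos hd0 _
  rw [show (96:ℝ) ^ p = 16 ^ p * 6 ^ p by rw [← mul_pow]; norm_num]
  field_simp
  ring

lemma tendsto_const_rpow_zero (β C : ℝ) (hβ : β < 0) :
    Tendsto (fun d : ℕ => C * (d : ℝ) ^ β) atTop (𝓝 0) := by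
  have h1 : Tendsto (fun x : ℝ => x ^ β) atTop (𝓝 0) := by
    have := tendsto_rpow_neg_atTop (show 0 < -β by linarith)
    simpa using this
  have h2 := (h1.comp tendsto_natCast_atTop_atTop).const_mul C
  simpa using h2

noncomputable def wendK (α : ℝ) (d : ℕ) : ℕ := min ⌊(d : ℝ) ^ α⌋₊ (d - 1)

noncomputable def wendN (α : ℝ) (d : ℕ) : ℕ :=
  if d = 0 then 1 else if Even d then 2 * d + wendK α d else 2 * d - wendK α d

lemma wendK_le (α : ℝ) (d : ℕ) : wendK α d ≤ d - 1 := min_le_right _ _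

lemma wendK_le_rpow (α : ℝ) (d : ℕ) : (wendK α d : ℝ) ≤ (d : ℝ) ^ α := by
  calc (wendK α d : ℝ) ≤ (⌊(d : ℝ) ^ α⌋₊ : ℝ) := by exact_mod_cast min_le_left _ _
    _ ≤ (d : ℝ) ^ α := Nat.floor_le (by positivity)

lemma wendN_gt (α : ℝ) (d : ℕ) : d < wendN α d := by
  rw [wendN]
  split_ifs with h0 he
  · omega
  · have := wendK_le α d; omega
  · have := wendK_le α d; omega

/-- eventually `wendK` behaves well -/
lemma wendK_eventually (α : ℝ) (hα1 : 1 / 2 < α) (hα2 : α < 1) (M : ℕ) :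
    ∀ᶠ d : ℕ in atTop, 1 ≤ d ∧ 8 * M ≤ wendK α d ∧ 2 * wendK α d ≤ d ∧
      (d : ℝ) ^ α / 2 ≤ wendK α d := by
  have hα0 : 0 < α := by linarith
  -- (d:ℝ)^α / d → 0 so eventually d^α ≤ d/4
  have h1 : Tendsto (fun d : ℕ => (d : ℝ) ^ (α - 1)) atTop (𝓝 0) := by
    simpa using tendsto_const_rpow_zero (α - 1) 1 (by linarith)
  have h2 : ∀ᶠ d : ℕ in atTop, (d : ℝ) ^ (α - 1) ≤ 1 / 4 := by
    filter_upwards [h1.eventually_le_const (show (0:ℝ) < 1/4 by norm_num)] with d hd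
    exact hd
  -- d^α → ∞ : eventually d^α ≥ max (16 M + 2) 2
  have h3 : Tendsto (fun d : ℕ => (d : ℝ) ^ α) atTop atTop :=
    (tendsto_rpow_atTop hα0).comp tendsto_natCast_atTop_atTop
  have h4 : ∀ᶠ d : ℕ in atTop, (16 * M + 2 : ℝ) ≤ (d : ℝ) ^ α := h3.eventually_ge_atTop _
  filter_upwards [h2, h4, eventually_ge_atTop 1] with d hd2 hd4 hd1
  have hdR : (1:ℝ) ≤ d := by exact_mod_cast hd1
  have hd0 : (0:ℝ) < d := by linarith
  -- from hd2 : d^α ≤ d/4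
  have hd14 : (d : ℝ) ^ α ≤ (d : ℝ) / 4 := by
    have h := mul_le_mul_of_nonneg_right hd2 hd0.le
    rw [← Real.rpow_add_one (ne_of_gt hd0) (α - 1), sub_add_cancel] at h
    linarith
  -- floor facts
  have hfl : (⌊(d : ℝ) ^ α⌋₊ : ℝ) ≤ (d : ℝ) ^ α := Nat.floor_le (by positivity)
  have hfg : (d : ℝ) ^ α - 1 ≤ (⌊(d : ℝ) ^ α⌋₊ : ℝ) := by
    have := Nat.lt_floor_add_one ((d : ℝ) ^ α)
    linarith
  have hmin : wendK α d = ⌊(d : ℝ) ^ α⌋₊ := by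
    rw [wendK, min_eq_left]
    have : (⌊(d : ℝ) ^ α⌋₊ : ℝ) ≤ (d : ℝ) / 4 := le_trans hfl hd14
    have hd1' : (1:ℕ) ≤ d := hd1
    -- ⌊d^α⌋ ≤ d/4 real ⇒ ⌊d^α⌋ ≤ d - 1
    by_contra hcon
    push_neg at hcon
    have hdle : d ≤ ⌊(d : ℝ) ^ α⌋₊ := by omega
    have : ((d : ℕ) : ℝ) ≤ (⌊(d : ℝ) ^ α⌋₊ : ℝ) := Nat.cast_le.2 hdle
    linarith
  have hKR : ((wendK α d : ℕ) : ℝ) = (⌊(d : ℝ) ^ α⌋₊ : ℝ) := by rw [hmin]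
  refine ⟨hd1, ?_, ?_, ?_⟩
  · -- 8 M ≤ wendK
    have : (8 * M : ℝ) ≤ (wendK α d : ℝ) := by
      rw [hKR]
      have : (16 * M + 2 : ℝ) / 2 ≤ (d : ℝ) ^ α - 1 := by linarith
      push_cast
      nlinarith
    exact_mod_cast this
  · -- 2 wendK ≤ d
    have : (2 * wendK α d : ℝ) ≤ (d : ℝ) := by
      rw [hKR]
      push_cast
      nlinarith
    exact_mod_cast this
  · -- d^α/2 ≤ wendK
    rw [hKR]
    have h2le : (2:ℝ) ≤ (d : ℝ) ^ α := by
      have : (2:ℝ) ≤ 16 * M + 2 := by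
        have : (0:ℝ) ≤ 16 * M := by positivity
        linarith
      linarith
    linarith

lemma wend_even_odd_bound (α : ℝ) (hα1 : 1 / 2 < α) (hα2 : α < 1) (p : ℕ) (hp : 1 ≤ p) :
    ∀ᶠ d : ℕ in atTop,
      (Even d → wendelP d (wendN α d) ≤
        ((p.factorial : ℝ) * 96 ^ p * 4 ^ p) * (d : ℝ) ^ ((p + 1 : ℝ) - α * (2 * p))) ∧
      (¬ Even d → 1 - ((p.factorial : ℝ) * 96 ^ p * 4 ^ p) *
          (d : ℝ) ^ ((p + 1 : ℝ) - α * (2 * p)) ≤ wendelP d (wendN α d)) := by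
  filter_upwards [wendK_eventually α hα1 hα2 p] with d hd
  obtain ⟨hd1, hK8, hK2, hKα⟩ := hd
  set K := wendK α d with hK
  have hKd : K ≤ d := by omega
  constructor
  · intro he
    have hNd : wendN α d = 2 * d + K := by
      rw [wendN, if_neg (by omega), if_pos he]
    rw [hNd]
    calc wendelP d (2 * d + K) ≤ (d : ℝ) * p.factorial * 16 ^ p * (6 * d) ^ p / K ^ (2 * p) :=
          wendelP_upper p d K hp hd1 hK8 hKd
      _ ≤ _ := bound_conv p α d K hd1 hKα
  · intro ho
    have hNd : wendN α d = 2 * d - K := by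
      rw [wendN, if_neg (by omega), if_neg ho]
    set d' := d - K with hd'
    have hd'1 : 1 ≤ d' := by omega
    have hKd' : K ≤ d' := by omega
    have hNd' : wendN α d = 2 * d' + K := by omega
    have hsymm := wendelP_add_symm d (wendN α d) hd1 (le_of_lt (wendN_gt α d))
    have hNdd : wendN α d - d = d' := by
      have := wendN_gt α d
      omega
    rw [hNdd] at hsymm
    have hup : wendelP d' (wendN α d) ≤
        ((p.factorial : ℝ) * 96 ^ p * 4 ^ p) * (d : ℝ) ^ ((p + 1 : ℝ) - α * (2 * p)) := by
      rw [hNd']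
      calc wendelP d' (2 * d' + K)
          ≤ (d' : ℝ) * p.factorial * 16 ^ p * (6 * d') ^ p / K ^ (2 * p) :=
            wendelP_upper p d' K hp hd'1 hK8 hKd'
        _ ≤ (d : ℝ) * p.factorial * 16 ^ p * (6 * d) ^ p / K ^ (2 * p) := by
            have hd'd : (d' : ℝ) ≤ d := by exact_mod_cast Nat.sub_le d K
            have hKpos : (0:ℝ) < (K : ℝ) ^ (2 * p) := by
              have : 0 < K := by omega
              positivity
            gcongr <;> positivity
        _ ≤ _ := bound_conv p α d K hd1 hKα
    linarith

theorem wendel_oscillation (α : ℝ) (hα1 : 1 / 2 < α) (hα2 : α < 1) :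
    ∃ N : ℕ → ℕ, (∀ d, d < N d) ∧
      Tendsto (fun d : ℕ => (d : ℝ) / (N d : ℝ)) atTop (𝓝 (1 / 2)) ∧
      (∃ C > (0 : ℝ), ∀ d : ℕ, 1 ≤ d → |(N d : ℝ) - 2 * d| ≤ C * (d : ℝ) ^ α) ∧
      Filter.liminf (fun d : ℕ => wendelP d (N d)) atTop = 0 ∧
      Filter.limsup (fun d : ℕ => wendelP d (N d)) atTop = 1 := by
  have hα0 : 0 < α := by linarith
  set p : ℕ := max ⌈2 / (2 * α - 1)⌉₊ 1 with hpdef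
  have hp1 : 1 ≤ p := le_max_right _ _
  set β : ℝ := (p + 1 : ℝ) - α * (2 * p) with hβdef
  have hβ : β ≤ -1 := by
    have h2α : (0:ℝ) < 2 * α - 1 := by linarith
    have hcl : 2 / (2 * α - 1) ≤ (p : ℝ) := by
      calc 2 / (2 * α - 1) ≤ (⌈2 / (2 * α - 1)⌉₊ : ℝ) := Nat.le_ceil _
        _ ≤ p := by exact_mod_cast le_max_left _ _
    have h2 : 2 ≤ (p : ℝ) * (2 * α - 1) := by
      rw [div_le_iff₀ h2α] at hcl; linarith
    rw [hβdef]
    nlinarith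
  set Cp : ℝ := (p.factorial : ℝ) * 96 ^ p * 4 ^ p with hCp
  have hG0 : Tendsto (fun d : ℕ => Cp * (d : ℝ) ^ β) atTop (𝓝 0) :=
    tendsto_const_rpow_zero β Cp (by linarith)
  set f : ℕ → ℝ := fun d => wendelP d (wendN α d) with hf
  have hf0 : ∀ d, 0 ≤ f d := fun d => wendelP_nonneg _ _
  have hf1 : ∀ d, f d ≤ 1 := fun d => wendelP_le_one _ _ (le_of_lt (wendN_gt α d))
  have hbound := wend_even_odd_bound α hα1 hα2 p hp1
  -- subsequences
  have hue : Tendsto (fun m : ℕ => 2 * m + 2) atTop atTop :=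
    tendsto_atTop_mono (fun m => by omega : ∀ m : ℕ, m ≤ 2 * m + 2) tendsto_id
  have huo : Tendsto (fun m : ℕ => 2 * m + 1) atTop atTop :=
    tendsto_atTop_mono (fun m => by omega : ∀ m : ℕ, m ≤ 2 * m + 1) tendsto_id
  have htend_e : Tendsto (fun m : ℕ => f (2 * m + 2)) atTop (𝓝 0) := by
    apply squeeze_zero' (Eventually.of_forall fun m => hf0 _) _ (hG0.comp hue)
    filter_upwards [hue.eventually hbound] with m hm
    exact (hm.1 ⟨m + 1, by omega⟩ : _)
  have htend_o : Tendsto (fun m : ℕ => f (2 * m + 1)) atTop (𝓝 1) := by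
    have hlow : Tendsto (fun m : ℕ => 1 - Cp * ((2 * m + 1 : ℕ) : ℝ) ^ β) atTop (𝓝 1) := by
      have := (tendsto_const_nhds (x := (1:ℝ)) (f := atTop (α := ℕ))).sub (hG0.comp huo)
      simpa using this
    apply tendsto_of_tendsto_of_tendsto_of_le_of_le' hlow tendsto_const_nhds
    · filter_upwards [huo.eventually hbound] with m hm
      refine hm.2 ?_
      simp [Nat.even_add_one, parity_simps]
    · exact Eventually.of_forall fun m => hf1 _
  -- bounds for liminf/limsup machinery
  have hbdd_ge : IsBoundedUnder (· ≥ ·) (atTop : Filter ℕ) f :=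
    Filter.isBoundedUnder_of ⟨0, fun d => hf0 d⟩
  have hbdd_le : IsBoundedUnder (· ≤ ·) (atTop : Filter ℕ) f :=
    Filter.isBoundedUnder_of ⟨1, fun d => hf1 d⟩
  refine ⟨wendN α, wendN_gt α, ?_, ⟨1, one_pos, ?_⟩, ?_, ?_⟩
  · -- Tendsto d / N d → 1/2
    rw [tendsto_iff_dist_tendsto_zero]
    apply squeeze_zero' (Eventually.of_forall fun d => dist_nonneg)
      (g := fun d : ℕ => (1 / 2) * (d : ℝ) ^ (α - 1))
    · filter_upwards [eventually_ge_atTop 1] with d hd1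
      have hdR : (1:ℝ) ≤ d := by exact_mod_cast hd1
      have hd0 : (0:ℝ) < d := by linarith
      have hN := wendN_gt α d
      have hNR : (d : ℝ) + 1 ≤ (wendN α d : ℝ) := by exact_mod_cast hN
      have hN0 : (0:ℝ) < (wendN α d : ℝ) := by linarith
      have habs : |(wendN α d : ℝ) - 2 * d| ≤ (d : ℝ) ^ α := by
        have hKle := wendK_le_rpow α d
        have hKd : wendK α d ≤ d - 1 := wendK_le α d
        rw [wendN, if_neg (by omega)]
        split_ifs with he
        · push_cast
          rw [show (2 * (d:ℝ) + (wendK α d : ℝ) - 2 * d) = (wendK α d : ℝ) by ring,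
            abs_of_nonneg (by positivity)]
          exact hKle
        · rw [Nat.cast_sub (by omega), ]
          push_cast
          rw [show (2 * (d:ℝ) - (wendK α d : ℝ) - 2 * d) = -(wendK α d : ℝ) by ring,
            abs_neg, abs_of_nonneg (by positivity)]
          exact hKle
      rw [Real.dist_eq]
      have key : |(d : ℝ) / (wendN α d : ℝ) - 1 / 2|
          = |(wendN α d : ℝ) - 2 * d| / (2 * (wendN α d : ℝ)) := by
        have e0 : (d : ℝ) / (wendN α d : ℝ) - 1 / 2
            = -(((wendN α d : ℝ) - 2 * d) / (2 * (wendN α d : ℝ))) := by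
          field_simp
          ring
        rw [e0, abs_neg, abs_div, abs_of_nonneg (by positivity : (0:ℝ) ≤ 2 * (wendN α d : ℝ))]
      rw [key]
      calc |(wendN α d : ℝ) - 2 * d| / (2 * (wendN α d : ℝ))
          ≤ (d : ℝ) ^ α / (2 * d) := by
            apply div_le_div₀ (by positivity) habs (by positivity)
            linarith
        _ = 1 / 2 * (d : ℝ) ^ (α - 1) := by
            rw [Real.rpow_sub hd0, Real.rpow_one]
            field_simp
    · simpa using tendsto_const_rpow_zero (α - 1) (1 / 2) (by linarith)
  · -- |N d - 2d| ≤ 1 * d^α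
    intro d hd1
    have hKle := wendK_le_rpow α d
    have hKd : wendK α d ≤ d - 1 := wendK_le α d
    rw [one_mul, wendN, if_neg (by omega)]
    split_ifs with he
    · push_cast
      rw [show (2 * (d:ℝ) + (wendK α d : ℝ) - 2 * d) = (wendK α d : ℝ) by ring,
        abs_of_nonneg (by positivity)]
      exact hKle
    · rw [Nat.cast_sub (by omega)]
      push_cast
      rw [show (2 * (d:ℝ) - (wendK α d : ℝ) - 2 * d) = -(wendK α d : ℝ) by ring,
        abs_neg, abs_of_nonneg (by positivity)]
      exact hKle
  · -- liminf = 0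
    have h1 : liminf f atTop ≤ liminf (fun m : ℕ => f (2 * m + 2)) atTop := by
      have heq : liminf f (Filter.map (fun m : ℕ => 2 * m + 2) atTop)
          = liminf (fun m : ℕ => f (2 * m + 2)) atTop := by
        rw [Filter.liminf, Filter.liminf, Filter.map_map]
        rfl
      rw [← heq]
      refine liminf_le_liminf_of_le hue hbdd_ge ?_
      exact isCoboundedUnder_ge_of_le _ (x := 1) hf1
    rw [htend_e.liminf_eq] at h1
    have h3 : 0 ≤ liminf f atTop :=
      le_liminf_of_le (isCoboundedUnder_ge_of_le _ (x := 1) hf1) (Eventually.of_forall hf0)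
    linarith
  · -- limsup = 1
    have h1 : limsup (fun m : ℕ => f (2 * m + 1)) atTop ≤ limsup f atTop := by
      have heq : limsup f (Filter.map (fun m : ℕ => 2 * m + 1) atTop)
          = limsup (fun m : ℕ => f (2 * m + 1)) atTop := by
        rw [Filter.limsup, Filter.limsup, Filter.map_map]
        rfl
      rw [← heq]
      refine limsup_le_limsup_of_le huo ?_ hbdd_le
      exact isCoboundedUnder_le_of_le _ (x := 0) hf0
    rw [htend_o.limsup_eq] at h1
    have h3 : limsup f atTop ≤ 1 :=
      limsup_le_of_le (isCoboundedUnder_le_of_le _ (x := 0) hf0) (Eventually.of_forall hf1)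
    linarith
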